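/- arXiv:2403.01302 — 3 statements merged into one kernel-verified Lean document; each statement's English description precedes it below -/
import Mathlib

section
/- Let θ∈(0,1), θ₁∈(θ/2,1], T>0, and let v:[0,T]→ℝ be Hölder continuous with exponent θ₁. Let p≥2 be an integer which is either even, or arbitrary provided v is nonnegative. Then, at every t∈(0,T] at which the Riemann–Liouville derivatives ∂^θ v(t) and ∂^θ(v^p)(t) exist, one has ∂^θ(v^p)(t) ≤ ∂^θ(v^p)(t) + (p−1)·v(t)^p·ω_{1−θ}(t) ≤ p·v(t)^{p−1}·∂^θ v(t). -/
/-!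
Put `a = v t`. The tangent-line defect `φ s = p a^(p-1) v s - (v s)^p - (p-1) a^p` is `≤ 0`
by convexity of `x ↦ x^p` (on `ℝ` for even `p`, on `[0, ∞)` otherwise), and `≥ -M (t-s)^(2θ₁)`
because the defect is quadratic in `v s - a` and `v` is `θ₁`-Hölder. Since `∂^θ 1 = ω_{1-θ}`,
linearity gives `∂^θ φ (t) = p a^(p-1) ∂^θ v (t) - ∂^θ (v^p) (t) - (p-1) a^p ω_{1-θ}(t)`, so it
suffices to show `∂^θ φ (t) ≥ 0`. Only left difference quotients are available (`v` is
controlled on `[0, T]` only, and `t` may be `T`). For `u < t` the increment of the kernel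
splits into a memory term `∫₀^u ((t-s)^(-θ) - (u-s)^(-θ)) φ s ≥ 0` and a local term
`∫ᵤ^t (t-s)^(-θ) φ s ≥ -C (t-u)^(2θ₁-θ+1)`; as `2θ₁ > θ`, the quotients are bounded below by
a quantity tending to `0`.
-/

open MeasureTheory Set

/-- Kernel whose derivative is the Riemann–Liouville fractional derivative:
`(1/Γ(1-θ)) ∫₀^τ (τ-s)^(-θ) v(s) ds`. -/
noncomputable def RLkernel (θ : ℝ) (v : ℝ → ℝ) (τ : ℝ) : ℝ :=
  (Real.Gamma (1 - θ))⁻¹ * ∫ s in (0:ℝ)..τ, (τ - s) ^ (-θ) * v s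

/-- Riemann–Liouville fractional derivative `∂^θ v`. -/
noncomputable def RLderiv (θ : ℝ) (v : ℝ → ℝ) (t : ℝ) : ℝ := deriv (RLkernel θ v) t

open Filter Topology intervalIntegral

lemma ConvexOn.add_mul_sub_le_of_hasDerivAt {S : Set ℝ} {f : ℝ → ℝ} {f' x y : ℝ}
    (hf : ConvexOn ℝ S f) (hx : x ∈ S) (hy : y ∈ S) (hd : HasDerivAt f f' x) :
    f x + f' * (y - x) ≤ f y := by
  rcases lt_trichotomy x y with hxy | rfl | hyx
  · have := hf.le_slope_of_hasDerivAt hx hy hxy hd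
    rw [slope_def_field, le_div_iff₀ (sub_pos.2 hxy)] at this
    linarith
  · simp
  · have := hf.slope_le_of_hasDerivAt hy hx hyx hd
    rw [slope_def_field, div_le_iff₀ (sub_pos.2 hyx)] at this
    linarith

lemma pow_add_mul_sub_le_pow {p : ℕ} {a x : ℝ} (h : Even p ∨ 0 ≤ a ∧ 0 ≤ x) :
    a ^ p + p * a ^ (p - 1) * (x - a) ≤ x ^ p := by
  rcases h with hp | ⟨ha, hx⟩
  · exact hp.convexOn_pow.add_mul_sub_le_of_hasDerivAt (mem_univ a) (mem_univ x)
      (hasDerivAt_pow p a)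
  · exact (convexOn_pow p).add_mul_sub_le_of_hasDerivAt ha hx (hasDerivAt_pow p a)

lemma pow_sub_pow_sub_mul_le {p : ℕ} {a x B : ℝ} (h : Even p ∨ 0 ≤ a ∧ 0 ≤ x)
    (ha : |a| ≤ B) (hx : |x| ≤ B) :
    x ^ p - a ^ p - p * a ^ (p - 1) * (x - a) ≤ p * (p - 1 : ℕ) * B ^ (p - 2) * (x - a) ^ 2 := by
  have hmax : max |x| |a| ≤ B := max_le hx ha
  have hdiff : |x ^ (p - 1) - a ^ (p - 1)| ≤ |x - a| * (p - 1 : ℕ) * B ^ (p - 2) :=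
    (abs_pow_sub_pow_le x a (p - 1)).trans <| by
      rw [Nat.sub_sub]; gcongr
  have htangent := pow_add_mul_sub_le_pow (h.imp id And.symm) (a := x) (x := a)
  calc x ^ p - a ^ p - p * a ^ (p - 1) * (x - a)
      ≤ p * ((x ^ (p - 1) - a ^ (p - 1)) * (x - a)) := by linarith
    _ ≤ p * (|x ^ (p - 1) - a ^ (p - 1)| * |x - a|) := by
      rw [← abs_mul]; gcongr; exact le_abs_self _
    _ ≤ p * ((|x - a| * (p - 1 : ℕ) * B ^ (p - 2)) * |x - a|) := by gcongr
    _ = p * (p - 1 : ℕ) * B ^ (p - 2) * (x - a) ^ 2 := by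
      rw [← sq_abs (x - a)]; ring

lemma tangent_defect_pow_mem_Icc {p : ℕ} {a x B E : ℝ} (hp : p ≠ 0) (h : Even p ∨ 0 ≤ a ∧ 0 ≤ x)
    (ha : |a| ≤ B) (hx : |x| ≤ B) (hE : (x - a) ^ 2 ≤ E) :
    p * a ^ (p - 1) * x - x ^ p - (p - 1) * a ^ p
      ∈ Icc (-(p * (p - 1 : ℕ) * B ^ (p - 2) * E)) 0 := by
  have hdefect : p * a ^ (p - 1) * x - x ^ p - (p - 1) * a ^ p
      = -(x ^ p - a ^ p - p * a ^ (p - 1) * (x - a)) := by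
    rw [← pow_sub_one_mul hp a]; ring
  have hB : 0 ≤ B := (abs_nonneg a).trans ha
  have htaylor := (pow_sub_pow_sub_mul_le h ha hx).trans
    (mul_le_mul_of_nonneg_left hE (by positivity))
  rw [hdefect]
  constructor <;> linarith [pow_add_mul_sub_le_pow h]

lemma continuousOn_of_abs_sub_le_mul_rpow {f : ℝ → ℝ} {S : Set ℝ} {C α : ℝ} (hC : 0 ≤ C)
    (hα : 0 < α) (hf : ∀ x ∈ S, ∀ y ∈ S, |f x - f y| ≤ C * |x - y| ^ α) : ContinuousOn f S := by
  have : HolderOnWith ⟨C, hC⟩ ⟨α, hα.le⟩ f S := by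
    intro x hx y hy
    rw [edist_dist, edist_dist, Real.dist_eq, Real.dist_eq]
    calc ENNReal.ofReal |f x - f y| ≤ ENNReal.ofReal (C * |x - y| ^ α) :=
          ENNReal.ofReal_le_ofReal (hf x hx y hy)
      _ = _ := by
          rw [ENNReal.ofReal_mul hC, ← ENNReal.ofReal_rpow_of_nonneg (abs_nonneg _) hα.le,
            ENNReal.ofReal_eq_coe_nnreal hC]
          norm_cast
  exact this.continuousOn hα

lemma sq_le_sq_mul_rpow_two_mul {y C r α : ℝ} (hr : 0 ≤ r) (h : |y| ≤ C * r ^ α) :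
    y ^ 2 ≤ C ^ 2 * r ^ (2 * α) :=
  calc y ^ 2 = |y| ^ 2 := (sq_abs y).symm
    _ ≤ (C * r ^ α) ^ 2 := pow_le_pow_left₀ (abs_nonneg y) h 2
    _ = C ^ 2 * r ^ (2 * α) := by
      rw [mul_pow, mul_comm 2 α, Real.rpow_mul hr, Real.rpow_two]

lemma intervalIntegrable_sub_rpow {r : ℝ} (hr : -1 < r) (τ a b : ℝ) :
    IntervalIntegrable (fun s => (τ - s) ^ r) volume a b := by
  simpa using (intervalIntegrable_rpow' (a := τ - a) (b := τ - b) hr).comp_sub_left τ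

lemma integral_sub_rpow {r : ℝ} (hr : -1 < r) (τ a : ℝ) :
    ∫ s in a..τ, (τ - s) ^ r = (τ - a) ^ (r + 1) / (r + 1) := by
  rw [intervalIntegral.integral_comp_sub_left (fun x => x ^ r), sub_self,
    integral_rpow (Or.inl hr), Real.zero_rpow (by linarith), sub_zero]

lemma intervalIntegrable_sub_rpow_mul {r τ a b : ℝ} {f : ℝ → ℝ} (hr : -1 < r) (hab : a ≤ b)
    (hf : ContinuousOn f (Icc a b)) :
    IntervalIntegrable (fun s => (τ - s) ^ r * f s) volume a b :=
  (intervalIntegrable_sub_rpow hr τ a b).mul_continuousOn (by rwa [uIcc_of_le hab])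

lemma integral_rpow_sub_rpow_mul_nonneg {θ u t : ℝ} {φ : ℝ → ℝ} (hθ : 0 ≤ θ) (hu : 0 ≤ u)
    (hut : u ≤ t) (hφ : ∀ s ∈ Icc 0 u, φ s ≤ 0) :
    0 ≤ ∫ s in (0:ℝ)..u, ((t - s) ^ (-θ) - (u - s) ^ (-θ)) * φ s := by
  -- the kernel difference is `≤ 0` only on `Ioo`: at `s = u` the junk value `0 ^ (-θ) = 0` breaks it
  rw [intervalIntegral.integral_of_le hu, integral_Ioc_eq_integral_Ioo]
  refine setIntegral_nonneg measurableSet_Ioo fun s hs => mul_nonneg_of_nonpos_of_nonpos ?_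
    (hφ s (Ioo_subset_Icc_self hs))
  exact sub_nonpos.2 (Real.rpow_le_rpow_of_nonpos (sub_pos.2 hs.2) (by linarith) (by linarith))

lemma neg_le_integral_sub_rpow_mul {θ γ M u t : ℝ} {φ : ℝ → ℝ} (hθ : θ < 1) (hγ : θ < γ)
    (hut : u ≤ t) (hφc : ContinuousOn φ (Icc u t))
    (hφ : ∀ s ∈ Icc u t, -(M * (t - s) ^ γ) ≤ φ s) :
    -(M * (t - u) ^ (γ - θ + 1) / (γ - θ + 1)) ≤ ∫ s in u..t, (t - s) ^ (-θ) * φ s := by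
  have hr : -1 < γ - θ := by linarith
  have hlower :
      ∫ s in u..t, -M * (t - s) ^ (γ - θ) = -(M * (t - u) ^ (γ - θ + 1) / (γ - θ + 1)) := by
    rw [intervalIntegral.integral_const_mul, integral_sub_rpow hr]; ring
  rw [← hlower]
  refine integral_mono_on hut ((intervalIntegrable_sub_rpow hr t u t).const_mul _)
    (intervalIntegrable_sub_rpow_mul (by linarith) hut hφc) fun s hs => ?_
  have hts : 0 ≤ t - s := sub_nonneg.2 hs.2
  calc -M * (t - s) ^ (γ - θ) = (t - s) ^ (-θ) * -(M * (t - s) ^ γ) := by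
        rw [show γ - θ = -θ + γ by ring, Real.rpow_add' hts (by linarith)]; ring
    _ ≤ (t - s) ^ (-θ) * φ s := by gcongr; exact hφ s hs

lemma RLkernel_one {θ : ℝ} (hθ : θ < 1) :
    RLkernel θ (fun _ => 1) = fun τ => (Real.Gamma (1 - θ))⁻¹ * (τ ^ (1 - θ) / (1 - θ)) := by
  ext τ
  simp only [RLkernel, mul_one]
  rw [integral_sub_rpow (by linarith), sub_zero, neg_add_eq_sub]

lemma hasDerivAt_RLkernel_one {θ t : ℝ} (hθ : θ < 1) (ht : 0 < t) :
    HasDerivAt (RLkernel θ fun _ => 1) (t ^ (-θ) / Real.Gamma (1 - θ)) t := by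
  rw [RLkernel_one hθ]
  have h := ((Real.hasDerivAt_rpow_const (p := 1 - θ) (Or.inl ht.ne')).div_const (1 - θ)).const_mul
    (Real.Gamma (1 - θ))⁻¹
  refine h.congr_deriv ?_
  rw [show 1 - θ - 1 = -θ by ring]
  field_simp [(sub_pos.2 hθ).ne']

lemma RLkernel_affine {θ τ c₁ c₂ : ℝ} {f g : ℝ → ℝ} (hθ : θ < 1) (hτ : 0 ≤ τ)
    (hf : ContinuousOn f (Icc 0 τ)) (hg : ContinuousOn g (Icc 0 τ)) :
    RLkernel θ (fun s => c₁ * f s - g s - c₂) τ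
      = c₁ * RLkernel θ f τ - RLkernel θ g τ - c₂ * RLkernel θ (fun _ => 1) τ := by
  have hr : -1 < -θ := by linarith
  have i₁ := (intervalIntegrable_sub_rpow_mul (τ := τ) hr hτ hf).const_mul c₁
  have i₂ := intervalIntegrable_sub_rpow_mul (τ := τ) hr hτ hg
  have i₃ := (intervalIntegrable_sub_rpow_mul (τ := τ) hr hτ
    (continuousOn_const (c := (1 : ℝ)))).const_mul c₂
  have hsplit : ∫ s in (0:ℝ)..τ, (τ - s) ^ (-θ) * (c₁ * f s - g s - c₂)
      = ∫ s in (0:ℝ)..τ, (c₁ * ((τ - s) ^ (-θ) * f s) - (τ - s) ^ (-θ) * g s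
          - c₂ * ((τ - s) ^ (-θ) * 1)) :=
    integral_congr fun s _ => by ring
  rw [RLkernel, hsplit, integral_sub (i₁.sub i₂) i₃, integral_sub i₁ i₂,
    intervalIntegral.integral_const_mul, intervalIntegral.integral_const_mul]
  simp only [RLkernel]
  ring

lemma hasDerivWithinAt_RLkernel_affine {θ T t c₁ c₂ : ℝ} {f g : ℝ → ℝ} (hθ : θ < 1)
    (ht : t ∈ Ioc 0 T) (hf : ContinuousOn f (Icc 0 T)) (hg : ContinuousOn g (Icc 0 T))
    (hf' : DifferentiableAt ℝ (RLkernel θ f) t) (hg' : DifferentiableAt ℝ (RLkernel θ g) t) :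
    HasDerivWithinAt (RLkernel θ fun s => c₁ * f s - g s - c₂)
      (c₁ * RLderiv θ f t - RLderiv θ g t - c₂ * (t ^ (-θ) / Real.Gamma (1 - θ))) (Iio t) t := by
  have hG := ((hf'.hasDerivAt.const_mul c₁).sub hg'.hasDerivAt).sub
    ((hasDerivAt_RLkernel_one hθ ht.1).const_mul c₂)
  have hEq : ∀ τ ∈ Icc 0 T, RLkernel θ (fun s => c₁ * f s - g s - c₂) τ
      = c₁ * RLkernel θ f τ - RLkernel θ g τ - c₂ * RLkernel θ (fun _ => 1) τ := fun τ hτ =>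
    RLkernel_affine hθ hτ.1 (hf.mono (Icc_subset_Icc_right hτ.2))
      (hg.mono (Icc_subset_Icc_right hτ.2))
  refine hG.hasDerivWithinAt.congr_of_eventuallyEq ?_ (hEq t (Ioc_subset_Icc_self ht))
  filter_upwards [Ioo_mem_nhdsLT ht.1] with τ hτ
  exact hEq τ ⟨hτ.1.le, hτ.2.le.trans ht.2⟩

lemma neg_le_RLkernel_sub_RLkernel {θ γ M u t : ℝ} {φ : ℝ → ℝ} (hθ : θ ∈ Ico 0 1) (hγ : θ < γ)
    (hu : 0 ≤ u) (hut : u ≤ t) (hφc : ContinuousOn φ (Icc 0 t)) (hφ : ∀ s ∈ Icc 0 t, φ s ≤ 0)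
    (hφM : ∀ s ∈ Icc 0 t, -(M * (t - s) ^ γ) ≤ φ s) :
    -((Real.Gamma (1 - θ))⁻¹ * (M * (t - u) ^ (γ - θ + 1) / (γ - θ + 1)))
      ≤ RLkernel θ φ t - RLkernel θ φ u := by
  have hr : -1 < -θ := by linarith [hθ.2]
  have hφc₁ : ContinuousOn φ (Icc 0 u) := hφc.mono (Icc_subset_Icc_right hut)
  have i₁ := intervalIntegrable_sub_rpow_mul (τ := t) hr hu hφc₁
  have i₂ := intervalIntegrable_sub_rpow_mul (τ := t) hr hut (hφc.mono (Icc_subset_Icc_left hu))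
  have i₃ := intervalIntegrable_sub_rpow_mul (τ := u) hr hu hφc₁
  have hsplit : RLkernel θ φ t - RLkernel θ φ u = (Real.Gamma (1 - θ))⁻¹ *
      ((∫ s in (0:ℝ)..u, ((t - s) ^ (-θ) - (u - s) ^ (-θ)) * φ s)
        + ∫ s in u..t, (t - s) ^ (-θ) * φ s) := by
    simp only [RLkernel, sub_mul]
    rw [← integral_add_adjacent_intervals i₁ i₂, integral_sub i₁ i₃]
    ring
  have hmemory := integral_rpow_sub_rpow_mul_nonneg hθ.1 hu hut fun s hs =>
    hφ s (Icc_subset_Icc_right hut hs)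
  have hlocal := neg_le_integral_sub_rpow_mul hθ.2 hγ hut (hφc.mono (Icc_subset_Icc_left hu))
    fun s hs => hφM s (Icc_subset_Icc_left hu hs)
  rw [hsplit, ← mul_neg]
  have : 0 ≤ (Real.Gamma (1 - θ))⁻¹ := inv_nonneg.2 (Real.Gamma_pos_of_pos (by linarith [hθ.2])).le
  gcongr
  linarith

theorem nonneg_of_hasDerivWithinAt_Iio_RLkernel {θ γ M t D : ℝ} {φ : ℝ → ℝ} (hθ : θ ∈ Ico 0 1)
    (hγ : θ < γ) (ht : 0 < t) (hφc : ContinuousOn φ (Icc 0 t)) (hφ : ∀ s ∈ Icc 0 t, φ s ≤ 0)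
    (hφM : ∀ s ∈ Icc 0 t, -(M * (t - s) ^ γ) ≤ φ s)
    (hD : HasDerivWithinAt (RLkernel θ φ) D (Iio t) t) : 0 ≤ D := by
  set C := (Real.Gamma (1 - θ))⁻¹ * M / (γ - θ + 1)
  have hslope : ∀ u ∈ Ioo 0 t, -(C * (t - u) ^ (γ - θ)) ≤ slope (RLkernel θ φ) t u := by
    intro u hu
    have htu : 0 < t - u := sub_pos.2 hu.2
    have h := neg_le_RLkernel_sub_RLkernel hθ hγ hu.1.le hu.2.le hφc hφ hφM
    rw [Real.rpow_add_one htu.ne'] at h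
    rw [slope_def_field, ← neg_sub t u, ← neg_sub (RLkernel θ φ t), neg_div_neg_eq,
      le_div_iff₀ htu]
    exact (le_of_eq (by simp only [C]; ring)).trans h
  have hlim : Tendsto (fun u => -(C * (t - u) ^ (γ - θ))) (𝓝[<] t) (𝓝 0) := by
    have hcont : Continuous fun u => -(C * (t - u) ^ (γ - θ)) :=
      ((continuous_const.sub continuous_id).rpow_const fun _ => Or.inr (by linarith)).const_mul C
        |>.neg
    simpa [Real.zero_rpow (by linarith : γ - θ ≠ 0)] using
      (hcont.tendsto t).mono_left nhdsWithin_le_nhds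
  exact le_of_tendsto_of_tendsto hlim
    ((hasDerivWithinAt_iff_tendsto_slope' (self_notMem_Iio (a := t))).1 hD)
    (eventually_of_mem (Ioo_mem_nhdsLT ht) hslope)

theorem stmt7_general (θ θ₁ T : ℝ) (hθ : θ ∈ Ioo (0:ℝ) 1) (hθ₁ : θ / 2 < θ₁)
    (v : ℝ → ℝ) (Cv : ℝ) (hCv : 0 ≤ Cv)
    (hHolder : ∀ s ∈ Icc (0:ℝ) T, ∀ r ∈ Icc (0:ℝ) T, |v s - v r| ≤ Cv * |s - r| ^ θ₁)
    (p : ℕ) (hp : 2 ≤ p)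
    (hpar : Even p ∨ ∀ s ∈ Icc (0:ℝ) T, 0 ≤ v s)
    (t : ℝ) (ht : t ∈ Ioc (0:ℝ) T)
    (hex₁ : DifferentiableAt ℝ (RLkernel θ v) t)
    (hex₂ : DifferentiableAt ℝ (RLkernel θ (fun s => v s ^ p)) t) :
    RLderiv θ (fun s => v s ^ p) t ≤
        RLderiv θ (fun s => v s ^ p) t
          + ((p : ℝ) - 1) * v t ^ p * (t ^ (-θ) / Real.Gamma (1 - θ))
      ∧ RLderiv θ (fun s => v s ^ p) t
          + ((p : ℝ) - 1) * v t ^ p * (t ^ (-θ) / Real.Gamma (1 - θ))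
        ≤ (p : ℝ) * v t ^ (p - 1) * RLderiv θ v t := by
  obtain ⟨hθ0, hθ1⟩ := hθ
  have htI : t ∈ Icc 0 T := Ioc_subset_Icc_self ht
  have hpar' : ∀ s ∈ Icc 0 T, Even p ∨ 0 ≤ v t ∧ 0 ≤ v s :=
    fun s hs => hpar.imp_right fun h => ⟨h t htI, h s hs⟩
  have hp₁ : (0 : ℝ) ≤ p - 1 := sub_nonneg.2 (Nat.one_le_cast.2 (by omega))
  have hvtp : 0 ≤ v t ^ p := (hpar' t htI).elim (·.pow_nonneg _) fun h => pow_nonneg h.1 p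
  have hω : 0 ≤ t ^ (-θ) / Real.Gamma (1 - θ) :=
    div_nonneg (Real.rpow_nonneg ht.1.le _) (Real.Gamma_pos_of_pos (by linarith)).le
  refine ⟨le_add_of_nonneg_right (by positivity), ?_⟩
  have hv : ContinuousOn v (Icc 0 T) :=
    continuousOn_of_abs_sub_le_mul_rpow hCv (by linarith) hHolder
  obtain ⟨B, hB⟩ := isCompact_Icc.exists_bound_of_continuousOn hv
  set a := v t
  have hφ : ∀ s ∈ Icc 0 t, p * a ^ (p - 1) * v s - v s ^ p - (p - 1) * a ^ p
      ∈ Icc (-(p * (p - 1 : ℕ) * B ^ (p - 2) * Cv ^ 2 * (t - s) ^ (2 * θ₁))) 0 := by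
    intro s hs
    have hsT : s ∈ Icc 0 T := Icc_subset_Icc_right ht.2 hs
    have hvs := hHolder s hsT t htI
    rw [abs_sub_comm s t, abs_of_nonneg (sub_nonneg.2 hs.2)] at hvs
    simpa only [mul_assoc] using tangent_defect_pow_mem_Icc (by omega) (hpar' s hsT)
      (hB t htI) (hB s hsT) (sq_le_sq_mul_rpow_two_mul (sub_nonneg.2 hs.2) hvs)
  have hφc : ContinuousOn (fun s => p * a ^ (p - 1) * v s - v s ^ p - (p - 1) * a ^ p)
      (Icc 0 t) :=
    (((continuousOn_const.mul hv).sub (hv.pow p)).sub continuousOn_const).mono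
      (Icc_subset_Icc_right ht.2)
  have hD := hasDerivWithinAt_RLkernel_affine (c₁ := p * a ^ (p - 1)) (c₂ := (p - 1) * a ^ p)
    (g := fun s => v s ^ p) hθ1 ht hv (hv.pow p) hex₁ hex₂
  have := nonneg_of_hasDerivWithinAt_Iio_RLkernel ⟨hθ0.le, hθ1⟩ (by linarith) ht.1 hφc
    (fun s hs => (hφ s hs).2) (fun s hs => (hφ s hs).1) hD
  linarith

theorem stmt7 (θ θ₁ T : ℝ) (hθ : θ ∈ Ioo (0:ℝ) 1) (hθ₁ : θ / 2 < θ₁) (hθ₁' : θ₁ ≤ 1)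
    (hT : 0 < T) (v : ℝ → ℝ) (Cv : ℝ) (hCv : 0 ≤ Cv)
    (hHolder : ∀ s ∈ Icc (0:ℝ) T, ∀ r ∈ Icc (0:ℝ) T, |v s - v r| ≤ Cv * |s - r| ^ θ₁)
    (p : ℕ) (hp : 2 ≤ p)
    (hpar : Even p ∨ ∀ s ∈ Icc (0:ℝ) T, 0 ≤ v s)
    (t : ℝ) (ht : t ∈ Ioc (0:ℝ) T)
    (hex₁ : DifferentiableAt ℝ (RLkernel θ v) t)
    (hex₂ : DifferentiableAt ℝ (RLkernel θ (fun s => v s ^ p)) t) :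
    RLderiv θ (fun s => v s ^ p) t ≤
        RLderiv θ (fun s => v s ^ p) t
          + ((p : ℝ) - 1) * v t ^ p * (t ^ (-θ) / Real.Gamma (1 - θ))
      ∧ RLderiv θ (fun s => v s ^ p) t
          + ((p : ℝ) - 1) * v t ^ p * (t ^ (-θ) / Real.Gamma (1 - θ))
        ≤ (p : ℝ) * v t ^ (p - 1) * RLderiv θ v t :=
  stmt7_general θ θ₁ T hθ hθ₁ v Cv hCv hHolder p hp hpar t ht hex₁ hex₂
end

section
/- Let θ∈(0,1). Let w₁:[0,∞)→ℝ be continuously differentiable, nondecreasing, with w₁(t)>0 for all t≥0, w₁ and w₁′ bounded on [0,∞), and suppose there is T_w>0 such that w₁(t)=w₁(T_w) for all t≥T_w. Let w₂:[0,∞)→ℝ be continuous and bounded. Then there exists a constant C>0, depending only on θ and independent of t and T_w, such that for every t≥0: J_θ(t; w₁², w₂²) / (2·w₁(t)) ≥ −( C·w₂(0)² / (1−θ) )·T_w^{1−θ}·sup_{s≥0}|w₁′(s)|. -/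
open MeasureTheory Set

/-- `J_θ(t; w₁, w₂) = ∫₀ᵗ (w₁(t)-w₁(s)) (t-s)^(-1-θ) (w₂(s)-w₂(0)) ds`. -/
noncomputable def Jfun (θ : ℝ) (w₁ w₂ : ℝ → ℝ) (t : ℝ) : ℝ :=
  ∫ s in (0:ℝ)..t, (w₁ t - w₁ s) * (t - s) ^ (-1 - θ) * (w₂ s - w₂ 0)

/-- Integrability of the kernel `min u Tw * u^(-1-θ)` on `[0,t]`. -/
lemma kernel_integrable {θ Tw : ℝ} (hθ0 : 0 < θ) (hθ1 : θ < 1) (hTw : 0 < Tw)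
    {t : ℝ} (ht : 0 ≤ t) :
    IntervalIntegrable (fun u => min u Tw * u ^ (-1 - θ)) volume 0 t := by
  have hbase : IntervalIntegrable (fun u : ℝ => u ^ (-θ)) volume 0 t :=
    intervalIntegral.intervalIntegrable_rpow' (by linarith)
  refine hbase.mono_fun ?_ ?_
  · exact ((measurable_id.min measurable_const).mul
      (measurable_id.pow measurable_const)).aestronglyMeasurable
  · rw [Set.uIoc_of_le ht]
    filter_upwards [ae_restrict_mem measurableSet_Ioc] with u hu
    have hu0 : 0 < u := hu.1
    have hmin0 : 0 ≤ min u Tw := le_min hu0.le hTw.le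
    have hr0 : 0 ≤ u ^ (-1 - θ) := Real.rpow_nonneg hu0.le _
    have hid : u * u ^ (-1 - θ) = u ^ (-θ) := by
      rw [show -θ = 1 + (-1 - θ) by ring, Real.rpow_add hu0, Real.rpow_one]
    simp only [Real.norm_eq_abs]
    rw [abs_of_nonneg (mul_nonneg hmin0 hr0), abs_of_nonneg (Real.rpow_nonneg hu0.le _)]
    calc min u Tw * u ^ (-1 - θ) ≤ u * u ^ (-1 - θ) :=
          mul_le_mul_of_nonneg_right (min_le_left _ _) hr0
      _ = u ^ (-θ) := hid

/-- The key kernel integral bound. -/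
lemma kernel_integral_le {θ Tw : ℝ} (hθ0 : 0 < θ) (hθ1 : θ < 1) (hTw : 0 < Tw)
    {t : ℝ} (ht : 0 ≤ t) :
    (∫ u in (0:ℝ)..t, min u Tw * u ^ (-1 - θ)) ≤
      Tw ^ (1 - θ) * (1 / (1 - θ) + 1 / θ) := by
  have h1θ : 0 < 1 - θ := by linarith
  have key1 : ∀ a : ℝ, 0 ≤ a → a ≤ Tw →
      (∫ u in (0:ℝ)..a, min u Tw * u ^ (-1 - θ)) = a ^ (1 - θ) / (1 - θ) := by
    intro a ha haT
    have hcongr : (∫ u in (0:ℝ)..a, min u Tw * u ^ (-1 - θ))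
        = ∫ u in (0:ℝ)..a, u ^ (-θ) := by
      refine intervalIntegral.integral_congr ?_
      intro u hu
      rw [Set.uIcc_of_le ha] at hu
      rcases eq_or_lt_of_le hu.1 with h0 | h0
      · rw [← h0]
        simp [Real.zero_rpow (by linarith : -θ ≠ 0),
          Real.zero_rpow (by linarith : (-1 : ℝ) - θ ≠ 0), min_eq_left hTw.le]
      · show min u Tw * u ^ (-1 - θ) = u ^ (-θ)
        rw [min_eq_left (le_trans hu.2 haT),
          show -θ = 1 + (-1 - θ) by ring, Real.rpow_add h0, Real.rpow_one]
    rw [hcongr, integral_rpow (Or.inl (by linarith : (-1 : ℝ) < -θ))]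
    rw [Real.zero_rpow (by linarith : -θ + 1 ≠ 0)]
    ring_nf
  rcases le_total t Tw with htT | htT
  · rw [key1 t ht htT]
    have h1 : t ^ (1 - θ) ≤ Tw ^ (1 - θ) := Real.rpow_le_rpow ht htT h1θ.le
    have h2 : 0 ≤ Tw ^ (1 - θ) := Real.rpow_nonneg hTw.le _
    have h3 : 0 < (1 : ℝ) / θ := by positivity
    have : t ^ (1 - θ) / (1 - θ) ≤ Tw ^ (1 - θ) / (1 - θ) := by gcongr
    calc t ^ (1 - θ) / (1 - θ) ≤ Tw ^ (1 - θ) / (1 - θ) := this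
      _ ≤ Tw ^ (1 - θ) * (1 / (1 - θ) + 1 / θ) := by
          rw [div_eq_mul_one_div]
          nlinarith
  · -- Tw ≤ t
    have int1 : IntervalIntegrable (fun u => min u Tw * u ^ (-1 - θ)) volume 0 Tw :=
      kernel_integrable hθ0 hθ1 hTw hTw.le
    have int2 : IntervalIntegrable (fun u => min u Tw * u ^ (-1 - θ)) volume Tw t := by
      refine (kernel_integrable hθ0 hθ1 hTw ht).mono_set' ?_
      rw [Set.uIoc_of_le htT, Set.uIoc_of_le ht]
      exact Set.Ioc_subset_Ioc hTw.le le_rfl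
    rw [← intervalIntegral.integral_add_adjacent_intervals int1 int2]
    have hpart1 : (∫ u in (0:ℝ)..Tw, min u Tw * u ^ (-1 - θ)) = Tw ^ (1 - θ) / (1 - θ) :=
      key1 Tw hTw.le le_rfl
    have hpart2 : (∫ u in Tw..t, min u Tw * u ^ (-1 - θ)) ≤ Tw ^ (1 - θ) / θ := by
      have hcongr : (∫ u in Tw..t, min u Tw * u ^ (-1 - θ))
          = ∫ u in Tw..t, Tw * u ^ (-1 - θ) := by
        refine intervalIntegral.integral_congr ?_
        intro u hu
        rw [Set.uIcc_of_le htT] at hu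
        show min u Tw * u ^ (-1 - θ) = Tw * u ^ (-1 - θ)
        rw [min_eq_right hu.1]
      rw [hcongr, intervalIntegral.integral_const_mul,
        integral_rpow (Or.inr ⟨by linarith, by
          rw [Set.uIcc_of_le htT]
          intro h0
          exact absurd h0.1 (by linarith)⟩)]
      have he : (-1 : ℝ) - θ + 1 = -θ := by ring
      rw [he]
      have htθ : 0 ≤ t ^ (-θ) := Real.rpow_nonneg (le_trans hTw.le htT) _
      have hTwθ : 0 < Tw ^ (-θ) := Real.rpow_pos_of_pos hTw _
      have hTwid : Tw * Tw ^ (-θ) = Tw ^ (1 - θ) := by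
        rw [show (1 : ℝ) - θ = 1 + -θ by ring, Real.rpow_add hTw, Real.rpow_one]
      calc Tw * ((t ^ (-θ) - Tw ^ (-θ)) / (-θ))
          = Tw * ((Tw ^ (-θ) - t ^ (-θ)) / θ) := by ring
        _ ≤ Tw * (Tw ^ (-θ) / θ) := by
            apply mul_le_mul_of_nonneg_left _ hTw.le
            gcongr
            linarith
        _ = Tw ^ (1 - θ) / θ := by rw [← hTwid]; ring
    rw [hpart1]
    have : Tw ^ (1 - θ) * (1 / (1 - θ) + 1 / θ)
        = Tw ^ (1 - θ) / (1 - θ) + Tw ^ (1 - θ) / θ := by ring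
    linarith

theorem stmt11 (θ : ℝ) (hθ : θ ∈ Ioo (0:ℝ) 1) :
    ∃ C > 0, ∀ (w₁ w₁' w₂ : ℝ → ℝ) (Tw B : ℝ), 0 < Tw →
      (∀ t ∈ Ici (0:ℝ), HasDerivAt w₁ (w₁' t) t) →
      ContinuousOn w₁' (Ici 0) →
      (∀ s t : ℝ, 0 ≤ s → s ≤ t → w₁ s ≤ w₁ t) →
      (∀ t ∈ Ici (0:ℝ), 0 < w₁ t) →
      (∃ Bw, ∀ t ∈ Ici (0:ℝ), |w₁ t| ≤ Bw) →
      (∀ t ∈ Ici (0:ℝ), |w₁' t| ≤ B) →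
      (∀ t ≥ Tw, w₁ t = w₁ Tw) →
      ContinuousOn w₂ (Ici 0) →
      (∃ Bw₂, ∀ t ∈ Ici (0:ℝ), |w₂ t| ≤ Bw₂) →
      ∀ t ∈ Ici (0:ℝ),
        -(C * (w₂ 0) ^ 2 / (1 - θ)) * Tw ^ (1 - θ) * B ≤
          Jfun θ (fun s => (w₁ s) ^ 2) (fun s => (w₂ s) ^ 2) t / (2 * w₁ t) := by
  obtain ⟨hθ0, hθ1⟩ := hθ
  have h1θ : 0 < 1 - θ := by linarith
  refine ⟨1 / θ, by positivity, ?_⟩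
  rintro w₁ w₁' w₂ Tw B hTw hderiv hcont' hmono hpos ⟨Bw, hBw⟩ hB hconst hw₂cont ⟨Bw₂, hBw₂⟩ t ht
  have ht0 : (0:ℝ) ≤ t := ht
  have hB0 : 0 ≤ B := (abs_nonneg _).trans (hB 0 Set.self_mem_Ici)
  have hBw0 : 0 ≤ Bw := (abs_nonneg _).trans (hBw 0 Set.self_mem_Ici)
  have hBw₂0 : 0 ≤ Bw₂ := (abs_nonneg _).trans (hBw₂ 0 Set.self_mem_Ici)
  have hw₁t : 0 < w₁ t := hpos t ht
  -- Lipschitz bound from the mean value inequality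
  have lip : ∀ a b : ℝ, 0 ≤ a → a ≤ b → w₁ b - w₁ a ≤ B * (b - a) := by
    intro a b ha hab
    have h := Convex.norm_image_sub_le_of_norm_hasDerivWithin_le
      (f := w₁) (f' := w₁') (s := Ici 0)
      (fun x hx => (hderiv x hx).hasDerivWithinAt) (fun x hx => hB x hx)
      (convex_Ici 0) ha (le_trans ha hab)
    rw [Real.norm_eq_abs, Real.norm_eq_abs] at h
    calc w₁ b - w₁ a ≤ |w₁ b - w₁ a| := le_abs_self _
      _ ≤ B * |b - a| := h
      _ = B * (b - a) := by rw [abs_of_nonneg (by linarith)]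
  -- refinement using constancy after Tw
  have hmin : ∀ s, 0 ≤ s → s ≤ t → w₁ t - w₁ s ≤ B * min (t - s) Tw := by
    intro s hs hst
    rcases le_total (t - s) Tw with h | h
    · rw [min_eq_left h]
      have := lip s t hs hst
      linarith
    · rw [min_eq_right h]
      have h1 : w₁ t ≤ w₁ (s + Tw) := by
        rcases le_total t (s + Tw) with h2 | h2
        · exact hmono t (s + Tw) ht h2
        · rw [hconst t (by linarith), hconst (s + Tw) (by linarith)]
      have h2 := lip s (s + Tw) hs (by linarith)
      have h3 : B * (s + Tw - s) = B * Tw := by ring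
      linarith
  -- continuity / measurability infrastructure
  have hw₁cont : ContinuousOn w₁ (Ici 0) :=
    fun x hx => (hderiv x hx).continuousAt.continuousWithinAt
  have hIocsub : Ioc (0:ℝ) t ⊆ Ici 0 := fun x hx => le_of_lt hx.1
  have hmw₁ : AEStronglyMeasurable w₁ (volume.restrict (Ioc 0 t)) :=
    (hw₁cont.mono hIocsub).aestronglyMeasurable measurableSet_Ioc
  have hmw₂ : AEStronglyMeasurable w₂ (volume.restrict (Ioc 0 t)) :=
    (hw₂cont.mono hIocsub).aestronglyMeasurable measurableSet_Ioc
  have hmr : AEStronglyMeasurable (fun s : ℝ => (t - s) ^ (-1 - θ))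
      (volume.restrict (Ioc 0 t)) :=
    ((measurable_const.sub measurable_id).pow measurable_const).aestronglyMeasurable
  have hIoc : Set.uIoc (0:ℝ) t = Ioc 0 t := Set.uIoc_of_le ht0
  -- the integrand and auxiliary functions
  have hmA : AEStronglyMeasurable (fun s : ℝ => ((w₁ t) ^ 2 - (w₁ s) ^ 2) * (t - s) ^ (-1 - θ))
      (volume.restrict (Ioc 0 t)) :=
    (aestronglyMeasurable_const.sub (hmw₁.pow 2)).mul hmr
  have hmf : AEStronglyMeasurable
      (fun s : ℝ => ((w₁ t) ^ 2 - (w₁ s) ^ 2) * (t - s) ^ (-1 - θ) * ((w₂ s) ^ 2 - (w₂ 0) ^ 2))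
      (volume.restrict (Ioc 0 t)) :=
    hmA.mul ((hmw₂.pow 2).sub aestronglyMeasurable_const)
  -- the dominating function
  have hDint : IntervalIntegrable (fun s : ℝ => (t - s) ^ (-θ)) volume 0 t := by
    have h := (intervalIntegral.intervalIntegrable_rpow' (a := 0) (b := t) (r := -θ)
      (by linarith)).comp_sub_left t
    simpa using h.symm
  -- pointwise bounds on `Ioc 0 t`
  have hbound : ∀ s ∈ Ioc (0:ℝ) t,
      |((w₁ t) ^ 2 - (w₁ s) ^ 2) * (t - s) ^ (-1 - θ)| ≤ 2 * Bw * B * (t - s) ^ (-θ) := by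
    intro s hs
    have hs0 : 0 ≤ s := hs.1.le
    have hst : s ≤ t := hs.2
    have h1 : w₁ s ≤ w₁ t := hmono s t hs0 hst
    have h2 : 0 < w₁ s := hpos s hs0
    have hw₁tB : w₁ t ≤ Bw := le_of_abs_le (hBw t ht)
    have hw₁sB : w₁ s ≤ Bw := le_of_abs_le (hBw s hs0)
    have hr0 : 0 ≤ (t - s) ^ (-1 - θ) := Real.rpow_nonneg (by linarith) _
    have hlip := lip s t hs0 hst
    have bound1 : (w₁ t) ^ 2 - (w₁ s) ^ 2 ≤ 2 * Bw * (B * (t - s)) := by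
      have e : (w₁ t) ^ 2 - (w₁ s) ^ 2 = (w₁ t + w₁ s) * (w₁ t - w₁ s) := by ring
      rw [e]
      have hb1 : w₁ t + w₁ s ≤ 2 * Bw := by linarith
      exact mul_le_mul hb1 hlip (by linarith) (by linarith)
    rw [abs_of_nonneg (mul_nonneg (by nlinarith) hr0)]
    rcases eq_or_lt_of_le hst with he | hlt
    · subst he
      simp [Real.zero_rpow (by linarith : -(1:ℝ) - θ ≠ 0),
        Real.zero_rpow (by linarith : -θ ≠ 0)]
    · have hts : 0 < t - s := by linarith
      have hid : (t - s) * (t - s) ^ (-1 - θ) = (t - s) ^ (-θ) := by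
        rw [show -θ = 1 + (-1 - θ) by ring, Real.rpow_add hts, Real.rpow_one]
      calc ((w₁ t) ^ 2 - (w₁ s) ^ 2) * (t - s) ^ (-1 - θ)
          ≤ 2 * Bw * (B * (t - s)) * (t - s) ^ (-1 - θ) :=
            mul_le_mul_of_nonneg_right bound1 hr0
        _ = 2 * Bw * B * ((t - s) * (t - s) ^ (-1 - θ)) := by ring
        _ = 2 * Bw * B * (t - s) ^ (-θ) := by rw [hid]
  have hW2 : ∀ s, 0 ≤ s → |(w₂ s) ^ 2 - (w₂ 0) ^ 2| ≤ 2 * Bw₂ ^ 2 := by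
    intro s hs
    have ha := hBw₂ s hs
    have hb := hBw₂ 0 Set.self_mem_Ici
    have h1 : (w₂ s) ^ 2 ≤ Bw₂ ^ 2 := by nlinarith [abs_nonneg (w₂ s), sq_abs (w₂ s)]
    have h2 : (w₂ 0) ^ 2 ≤ Bw₂ ^ 2 := by nlinarith [abs_nonneg (w₂ 0), sq_abs (w₂ 0)]
    rw [abs_le]
    constructor <;> nlinarith [sq_nonneg (w₂ s), sq_nonneg (w₂ 0)]
  -- integrability of A
  have hAint : IntervalIntegrable
      (fun s : ℝ => ((w₁ t) ^ 2 - (w₁ s) ^ 2) * (t - s) ^ (-1 - θ)) volume 0 t := by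
    refine (hDint.const_mul (2 * Bw * B)).mono_fun (hIoc ▸ hmA) ?_
    rw [hIoc]
    filter_upwards [ae_restrict_mem measurableSet_Ioc] with s hs
    have hM0 : 0 ≤ 2 * Bw * B := by positivity
    have hr0 : 0 ≤ (t - s) ^ (-θ) := Real.rpow_nonneg (by linarith [hs.2]) _
    simp only [Real.norm_eq_abs]
    rw [abs_of_nonneg (mul_nonneg hM0 hr0)]
    exact hbound s hs
  -- integrability of f
  have hfint : IntervalIntegrable
      (fun s : ℝ => ((w₁ t) ^ 2 - (w₁ s) ^ 2) * (t - s) ^ (-1 - θ) * ((w₂ s) ^ 2 - (w₂ 0) ^ 2))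
      volume 0 t := by
    refine (hDint.const_mul (2 * Bw * B * (2 * Bw₂ ^ 2))).mono_fun (hIoc ▸ hmf) ?_
    rw [hIoc]
    filter_upwards [ae_restrict_mem measurableSet_Ioc] with s hs
    have hM0 : 0 ≤ 2 * Bw * B * (2 * Bw₂ ^ 2) := by positivity
    have hr0 : 0 ≤ (t - s) ^ (-θ) := Real.rpow_nonneg (by linarith [hs.2]) _
    simp only [Real.norm_eq_abs]
    rw [abs_of_nonneg (mul_nonneg hM0 hr0)]
    rw [abs_mul]
    calc |((w₁ t) ^ 2 - (w₁ s) ^ 2) * (t - s) ^ (-1 - θ)| * |(w₂ s) ^ 2 - (w₂ 0) ^ 2|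
        ≤ (2 * Bw * B * (t - s) ^ (-θ)) * (2 * Bw₂ ^ 2) :=
          mul_le_mul (hbound s hs) (hW2 s hs.1.le) (abs_nonneg _)
            (by positivity)
      _ = 2 * Bw * B * (2 * Bw₂ ^ 2) * (t - s) ^ (-θ) := by ring
  -- integrability of G
  have hGint : IntervalIntegrable
      (fun s : ℝ => 2 * w₁ t * B * (min (t - s) Tw * (t - s) ^ (-1 - θ))) volume 0 t := by
    have h := ((kernel_integrable hθ0 hθ1 hTw ht0).comp_sub_left t).symm
    simp only [sub_zero, sub_self] at h
    exact h.const_mul _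
  -- pointwise comparison on Icc
  have hA_nonneg : ∀ s ∈ Icc (0:ℝ) t, 0 ≤ ((w₁ t) ^ 2 - (w₁ s) ^ 2) * (t - s) ^ (-1 - θ) := by
    intro s hs
    have h1 : w₁ s ≤ w₁ t := hmono s t hs.1 hs.2
    have h2 : 0 < w₁ s := hpos s hs.1
    have h3 : 0 ≤ (t - s) ^ (-1 - θ) := Real.rpow_nonneg (by linarith [hs.2]) _
    exact mul_nonneg (by nlinarith) h3
  have hA_le : ∀ s ∈ Icc (0:ℝ) t,
      ((w₁ t) ^ 2 - (w₁ s) ^ 2) * (t - s) ^ (-1 - θ) ≤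
        2 * w₁ t * B * (min (t - s) Tw * (t - s) ^ (-1 - θ)) := by
    intro s hs
    have h1 : w₁ s ≤ w₁ t := hmono s t hs.1 hs.2
    have h2 : 0 < w₁ s := hpos s hs.1
    have h3 : 0 ≤ (t - s) ^ (-1 - θ) := Real.rpow_nonneg (by linarith [hs.2]) _
    have h4 := hmin s hs.1 hs.2
    have key : (w₁ t) ^ 2 - (w₁ s) ^ 2 ≤ 2 * w₁ t * B * min (t - s) Tw := by
      have e : (w₁ t) ^ 2 - (w₁ s) ^ 2 = (w₁ t + w₁ s) * (w₁ t - w₁ s) := by ring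
      rw [e]
      calc (w₁ t + w₁ s) * (w₁ t - w₁ s) ≤ 2 * w₁ t * (B * min (t - s) Tw) :=
            mul_le_mul (by linarith) h4 (by linarith) (by linarith)
        _ = 2 * w₁ t * B * min (t - s) Tw := by ring
    calc ((w₁ t) ^ 2 - (w₁ s) ^ 2) * (t - s) ^ (-1 - θ)
        ≤ 2 * w₁ t * B * min (t - s) Tw * (t - s) ^ (-1 - θ) :=
          mul_le_mul_of_nonneg_right key h3
      _ = 2 * w₁ t * B * (min (t - s) Tw * (t - s) ^ (-1 - θ)) := by ring
  have hf_ge : ∀ s ∈ Icc (0:ℝ) t,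
      -((w₂ 0) ^ 2 * (((w₁ t) ^ 2 - (w₁ s) ^ 2) * (t - s) ^ (-1 - θ))) ≤
        ((w₁ t) ^ 2 - (w₁ s) ^ 2) * (t - s) ^ (-1 - θ) * ((w₂ s) ^ 2 - (w₂ 0) ^ 2) := by
    intro s hs
    have h0 := hA_nonneg s hs
    nlinarith [mul_nonneg h0 (sq_nonneg (w₂ s))]
  -- integral comparisons
  have step1 : (∫ s in (0:ℝ)..t, -((w₂ 0) ^ 2 * (((w₁ t) ^ 2 - (w₁ s) ^ 2) * (t - s) ^ (-1 - θ))))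
      ≤ ∫ s in (0:ℝ)..t,
        ((w₁ t) ^ 2 - (w₁ s) ^ 2) * (t - s) ^ (-1 - θ) * ((w₂ s) ^ 2 - (w₂ 0) ^ 2) :=
    intervalIntegral.integral_mono_on ht0 ((hAint.const_mul _).neg) hfint hf_ge
  have step2 : (∫ s in (0:ℝ)..t, ((w₁ t) ^ 2 - (w₁ s) ^ 2) * (t - s) ^ (-1 - θ))
      ≤ ∫ s in (0:ℝ)..t, 2 * w₁ t * B * (min (t - s) Tw * (t - s) ^ (-1 - θ)) :=
    intervalIntegral.integral_mono_on ht0 hAint hGint hA_le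
  have step3 : (∫ s in (0:ℝ)..t, 2 * w₁ t * B * (min (t - s) Tw * (t - s) ^ (-1 - θ)))
      ≤ 2 * w₁ t * B * (Tw ^ (1 - θ) * (1 / (1 - θ) + 1 / θ)) := by
    rw [intervalIntegral.integral_const_mul]
    have hrefl : (∫ s in (0:ℝ)..t, min (t - s) Tw * (t - s) ^ (-1 - θ))
        = ∫ u in (0:ℝ)..t, min u Tw * u ^ (-1 - θ) := by
      simpa using intervalIntegral.integral_comp_sub_left
        (fun u => min u Tw * u ^ (-1 - θ)) t (a := 0) (b := t)
    rw [hrefl]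
    exact mul_le_mul_of_nonneg_left (kernel_integral_le hθ0 hθ1 hTw ht0) (by positivity)
  have e2 : (∫ s in (0:ℝ)..t, -((w₂ 0) ^ 2 * (((w₁ t) ^ 2 - (w₁ s) ^ 2) * (t - s) ^ (-1 - θ))))
      = -((w₂ 0) ^ 2 * ∫ s in (0:ℝ)..t, ((w₁ t) ^ 2 - (w₁ s) ^ 2) * (t - s) ^ (-1 - θ)) := by
    rw [intervalIntegral.integral_neg, intervalIntegral.integral_const_mul]
  have hmul : (w₂ 0) ^ 2 * (∫ s in (0:ℝ)..t, ((w₁ t) ^ 2 - (w₁ s) ^ 2) * (t - s) ^ (-1 - θ))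
      ≤ (w₂ 0) ^ 2 * (2 * w₁ t * B * (Tw ^ (1 - θ) * (1 / (1 - θ) + 1 / θ))) :=
    mul_le_mul_of_nonneg_left (step2.trans step3) (sq_nonneg _)
  have hJ : -((w₂ 0) ^ 2 * (2 * w₁ t * B * (Tw ^ (1 - θ) * (1 / (1 - θ) + 1 / θ))))
      ≤ ∫ s in (0:ℝ)..t,
        ((w₁ t) ^ 2 - (w₁ s) ^ 2) * (t - s) ^ (-1 - θ) * ((w₂ s) ^ 2 - (w₂ 0) ^ 2) := by
    rw [e2] at step1
    linarith
  have hJfun : Jfun θ (fun s => (w₁ s) ^ 2) (fun s => (w₂ s) ^ 2) t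
      = ∫ s in (0:ℝ)..t,
        ((w₁ t) ^ 2 - (w₁ s) ^ 2) * (t - s) ^ (-1 - θ) * ((w₂ s) ^ 2 - (w₂ 0) ^ 2) := rfl
  rw [hJfun, le_div_iff₀ (by positivity : (0:ℝ) < 2 * w₁ t)]
  calc -(1 / θ * (w₂ 0) ^ 2 / (1 - θ)) * Tw ^ (1 - θ) * B * (2 * w₁ t)
      = -((w₂ 0) ^ 2 * (2 * w₁ t * B * (Tw ^ (1 - θ) * (1 / (1 - θ) + 1 / θ)))) := by
        field_simp
        ring
    _ ≤ _ := hJ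
end

section
/- Let θ∈(0,1). Let w₁:[0,∞)→ℝ be continuously differentiable, nondecreasing, with w₁(t)>0 for all t≥0, w₁ and w₁′ bounded on [0,∞), and suppose there is T_w>0 such that w₁(t)=w₁(T_w) for all t≥T_w. Then for every t>0: |∂^θ(w₁²)(t)| / w₁(t) ≤ w₁(0)/( t^θ·Γ(1−θ) ) + ( 2·sup_{s≥0}|w₁′(s)| / Γ(2−θ) )·T_w^{1−θ}. -/
/-!
Substituting `s = x - r` and extending `f` to the left of `0` by the constant `f 0`, the kernel
`∫₀ˣ (x - s)^(-θ) f s ds` becomes `f 0 x^(1-θ)/(1-θ) + ∫₀ᵇ r^(-θ) (f (x - r) - f 0) dr` for any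
`b ≥ x`, an integral over a fixed interval. For Lipschitz `f` (Rademacher gives `f'` a.e.) one may
differentiate under the integral sign, so
`∂^θ f t = Γ(1-θ)⁻¹ (f 0 t^(-θ) + ∫₀ᵗ r^(-θ) f' (t - r) dr)`.
For `f = w₁²` we have `f' = 2 w₁ w₁'`, which vanishes beyond `T_w` and is bounded by `2 B w₁ t`
on `[0, t]` by monotonicity; subadditivity of `x ↦ x^(1-θ)` bounds the integral by
`2 B w₁ t T_w^(1-θ)/(1-θ)`, and `f 0 = w₁ 0 ^ 2 ≤ w₁ 0 w₁ t`.
-/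

open MeasureTheory Set

open Filter Topology intervalIntegral
open scoped NNReal

theorem integral_sub_rpow_mul_eq_of_const_on_Iic {θ : ℝ} (hθ : θ < 1) {f : ℝ → ℝ}
    (hf : Continuous f) (hf0 : ∀ s ≤ 0, f s = f 0) {x b : ℝ} (hxb : x ≤ b) :
    ∫ s in 0..x, (x - s) ^ (-θ) * f s =
      f 0 * (x ^ (1 - θ) / (1 - θ)) + ∫ r in 0..b, r ^ (-θ) * (f (x - r) - f 0) := by
  have hker : ∀ a c : ℝ, IntervalIntegrable (fun r : ℝ => r ^ (-θ)) volume a c :=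
    fun a c => intervalIntegrable_rpow' (by linarith)
  have hint : ∀ a c : ℝ, IntervalIntegrable (fun r => r ^ (-θ) * (f (x - r) - f 0)) volume a c :=
    fun a c => (hker a c).mul_continuousOn
      ((hf.comp (continuous_sub_left x)).sub continuous_const).continuousOn
  have htail : ∫ r in x..b, r ^ (-θ) * (f (x - r) - f 0) = 0 := by
    rw [← integral_zero (a := x) (b := b) (μ := volume)]
    refine integral_congr fun r hr => ?_
    rw [uIcc_of_le hxb] at hr
    simp [hf0 (x - r) (by linarith [hr.1])]
  have hsub : ∫ s in 0..x, (x - s) ^ (-θ) * f s = ∫ r in 0..x, r ^ (-θ) * f (x - r) := by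
    simpa using integral_comp_sub_left (fun r => r ^ (-θ) * f (x - r)) x (a := 0) (b := x)
  have hmain : IntervalIntegrable (fun r => r ^ (-θ) * f (x - r)) volume 0 x :=
    (hker 0 x).mul_continuousOn (hf.comp (continuous_sub_left x)).continuousOn
  rw [← integral_add_adjacent_intervals (hint 0 x) (hint x b), htail, add_zero, hsub]
  simp only [mul_sub]
  rw [integral_sub hmain ((hker 0 x).mul_const _), intervalIntegral.integral_mul_const,
    integral_rpow (Or.inl (by linarith)), show -θ + 1 = 1 - θ by ring, Real.zero_rpow (by linarith)]
  ring

theorem hasDerivAt_integral_rpow_mul_sub {θ : ℝ} (hθ : θ < 1) {f : ℝ → ℝ} {L : ℝ≥0}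
    (hf : LipschitzWith L f) (hf0 : ∀ s ≤ 0, f s = f 0) {t b : ℝ} (ht : 0 < t) (htb : t ≤ b) :
    HasDerivAt (fun x => ∫ r in 0..b, r ^ (-θ) * (f (x - r) - f 0))
      (∫ r in 0..t, r ^ (-θ) * deriv f (t - r)) t := by
  have hb : 0 ≤ b := ht.le.trans htb
  have hker : IntegrableOn (fun r : ℝ => r ^ (-θ)) (Ioc 0 b) :=
    (intervalIntegrable_iff_integrableOn_Ioc_of_le hb).1 (intervalIntegrable_rpow' (by linarith))
  have hderiv_neg : ∀ s < 0, deriv f s = 0 := fun s hs => by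
    have : f =ᶠ[𝓝 s] fun _ => f 0 := by
      filter_upwards [Iio_mem_nhds hs] with u hu using hf0 u (le_of_lt hu)
    rw [this.deriv_eq, deriv_const]
  have hcont := hf.continuous
  have hF_int : Integrable (fun r => r ^ (-θ) * (f (t - r) - f 0)) (volume.restrict (Ioc 0 b)) :=
    (intervalIntegrable_iff_integrableOn_Ioc_of_le hb).1 <|
      (intervalIntegrable_rpow' (by linarith)).mul_continuousOn
        ((hcont.comp (continuous_sub_left t)).sub continuous_const).continuousOn
  have hF'_meas : AEStronglyMeasurable (fun r => r ^ (-θ) * deriv f (t - r))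
      (volume.restrict (Ioc 0 b)) := by
    have := measurable_deriv f
    fun_prop
  have h_lipsch : ∀ᵐ r ∂volume.restrict (Ioc 0 b),
      LipschitzOnWith (Real.nnabs (L * r ^ (-θ))) (fun x => r ^ (-θ) * (f (x - r) - f 0)) univ := by
    refine (ae_restrict_iff' measurableSet_Ioc).2 (Eventually.of_forall fun r hr => ?_)
    refine (LipschitzWith.of_dist_le_mul fun x y => ?_).lipschitzOnWith
    have hr' : 0 ≤ r ^ (-θ) := Real.rpow_nonneg hr.1.le _
    have hfr : dist (f (x - r)) (f (y - r)) ≤ L * dist x y := by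
      simpa using hf.dist_le_mul (x - r) (y - r)
    calc dist (r ^ (-θ) * (f (x - r) - f 0)) (r ^ (-θ) * (f (y - r) - f 0))
        = r ^ (-θ) * dist (f (x - r)) (f (y - r)) := by
          rw [Real.dist_eq, Real.dist_eq, ← mul_sub, sub_sub_sub_cancel_right, abs_mul,
            abs_of_nonneg hr']
      _ ≤ r ^ (-θ) * (L * dist x y) := by gcongr
      _ = Real.nnabs (L * r ^ (-θ)) * dist x y := by
          rw [Real.coe_nnabs, abs_of_nonneg (by positivity)]
          ring
  have h_diff : ∀ᵐ r ∂volume.restrict (Ioc 0 b),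
      HasDerivAt (fun x => r ^ (-θ) * (f (x - r) - f 0)) (r ^ (-θ) * deriv f (t - r)) t := by
    refine ae_restrict_of_ae ?_
    filter_upwards [(volume.measurePreserving_sub_left t).quasiMeasurePreserving.ae
      hf.ae_differentiableAt_real] with r hr
    simpa using ((hr.hasDerivAt.comp t ((hasDerivAt_id t).sub_const r)).sub_const (f 0)).const_mul
      (r ^ (-θ))
  have hderiv := (hasDerivAt_integral_of_dominated_loc_of_lip univ_mem
    (Eventually.of_forall fun x => by fun_prop) hF_int hF'_meas h_lipsch (hker.const_mul _)
    h_diff).2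
  simp only [integral_of_le hb, integral_of_le ht.le]
  rwa [setIntegral_eq_of_subset_of_forall_sdiff_eq_zero measurableSet_Ioc
    (Ioc_subset_Ioc_right htb) fun r hr => ?_] at hderiv
  have htr : t < r := by
    simp only [Set.mem_sdiff, mem_Ioc, not_and, not_le] at hr
    exact hr.2 hr.1.1
  rw [hderiv_neg (t - r) (by linarith), mul_zero]

theorem hasDerivAt_integral_sub_rpow_mul {θ : ℝ} (hθ : θ < 1) {f : ℝ → ℝ} {L : ℝ≥0}
    (hf : LipschitzWith L f) (hf0 : ∀ s ≤ 0, f s = f 0) {t : ℝ} (ht : 0 < t) :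
    HasDerivAt (fun x => ∫ s in 0..x, (x - s) ^ (-θ) * f s)
      (f 0 * t ^ (-θ) + ∫ r in 0..t, r ^ (-θ) * deriv f (t - r)) t := by
  have hpow : HasDerivAt (fun x => f 0 * (x ^ (1 - θ) / (1 - θ))) (f 0 * t ^ (-θ)) t := by
    refine (((Real.hasDerivAt_rpow_const (Or.inl ht.ne')).div_const (1 - θ)).const_mul
      (f 0)).congr_deriv ?_
    rw [show 1 - θ - 1 = -θ by ring]
    field_simp [show 1 - θ ≠ 0 by linarith]
  refine (hpow.add (hasDerivAt_integral_rpow_mul_sub hθ hf hf0 ht (lt_add_one t).le))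
    |>.congr_of_eventuallyEq ?_
  filter_upwards [Iio_mem_nhds (lt_add_one t)] with x hx
  exact integral_sub_rpow_mul_eq_of_const_on_Iic hθ hf.continuous hf0 hx.le

theorem hasDerivAt_RLkernel {θ : ℝ} (hθ : θ < 1) {f : ℝ → ℝ} {L : ℝ≥0} {b t : ℝ}
    (hf : LipschitzOnWith L f (Icc 0 b)) (ht : t ∈ Ioo 0 b) :
    HasDerivAt (RLkernel θ f) ((Real.Gamma (1 - θ))⁻¹ *
      (f 0 * t ^ (-θ) + ∫ r in 0..t, r ^ (-θ) * deriv f (t - r))) t := by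
  have hb : 0 ≤ b := ht.1.le.trans ht.2.le
  set g : ℝ → ℝ := fun s => f (projIcc 0 b hb s)
  have hproj := (LipschitzWith.subtype_val (Icc 0 b)).comp (LipschitzWith.projIcc hb)
  have hg : LipschitzWith L g := by
    have := hf.comp hproj.lipschitzOnWith (s := univ) fun s _ => Subtype.mem _
    rwa [mul_one, mul_one, lipschitzOnWith_univ] at this
  have hgf : ∀ s ∈ Icc 0 b, g s = f s := fun s hs => by simp [g, projIcc_of_mem hb hs]
  have hg0 : ∀ s ≤ 0, g s = g 0 := fun s hs => by simp [g, projIcc_of_le_left hb hs]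
  have hderiv : ∀ s ∈ Ioo 0 b, deriv g s = deriv f s := fun s hs =>
    Filter.EventuallyEq.deriv_eq <| eventually_of_mem (Ioo_mem_nhds hs.1 hs.2)
      fun u hu => hgf u (Ioo_subset_Icc_self hu)
  have hkernel : RLkernel θ g =ᶠ[𝓝 t] RLkernel θ f := by
    filter_upwards [Ioo_mem_nhds ht.1 ht.2] with x hx
    simp only [RLkernel]
    congr 1
    refine integral_congr fun s hs => ?_
    rw [uIcc_of_le hx.1.le] at hs
    simp only [hgf s ⟨hs.1, hs.2.trans hx.2.le⟩]
  have hint : ∫ r in 0..t, r ^ (-θ) * deriv g (t - r) =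
      ∫ r in 0..t, r ^ (-θ) * deriv f (t - r) := by
    refine integral_congr_ae ?_
    filter_upwards [volume.ae_ne t] with r hrt hr
    rw [uIoc_of_le ht.1.le] at hr
    rw [hderiv (t - r) ⟨by linarith [lt_of_le_of_ne hr.2 hrt], by linarith [hr.1, ht.2]⟩]
  rw [← hint, ← hg0 0 le_rfl |>.trans (hgf 0 ⟨le_rfl, hb⟩)]
  exact ((hasDerivAt_integral_sub_rpow_mul hθ hg hg0 ht.1).const_mul _).congr_of_eventuallyEq
    hkernel.symm

theorem abs_integral_rpow_mul_le {θ : ℝ} (hθ : θ < 1) {ψ : ℝ → ℝ} {a t C : ℝ} (ha : 0 ≤ a)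
    (hat : a ≤ t) (hC : ∀ r ∈ Ioc a t, |ψ r| ≤ C) :
    |∫ r in a..t, r ^ (-θ) * ψ r| ≤ C * ((t ^ (1 - θ) - a ^ (1 - θ)) / (1 - θ)) := by
  have hker := intervalIntegrable_rpow' (a := a) (b := t) (r := -θ) (by linarith)
  rw [← Real.norm_eq_abs]
  calc ‖∫ r in a..t, r ^ (-θ) * ψ r‖ ≤ ∫ r in a..t, C * r ^ (-θ) := by
        refine norm_integral_le_of_norm_le hat (Eventually.of_forall fun r hr => ?_)
          (hker.const_mul C)
        have hr' : 0 ≤ r ^ (-θ) := Real.rpow_nonneg (ha.trans hr.1.le) _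
        rw [Real.norm_eq_abs, abs_mul, abs_of_nonneg hr', mul_comm]
        exact mul_le_mul_of_nonneg_right (hC r hr) hr'
    _ = C * ((t ^ (1 - θ) - a ^ (1 - θ)) / (1 - θ)) := by
        rw [intervalIntegral.integral_const_mul, integral_rpow (Or.inl (by linarith)),
          show -θ + 1 = 1 - θ by ring]

theorem abs_integral_rpow_mul_sub_le {θ : ℝ} (hθ0 : 0 ≤ θ) (hθ : θ < 1) {φ : ℝ → ℝ}
    {t T C : ℝ} (ht : 0 < t) (hT : 0 ≤ T) (hC : ∀ s ∈ Ico 0 t, |φ s| ≤ C)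
    (hφ : ∀ s, T < s → φ s = 0) :
    |∫ r in 0..t, r ^ (-θ) * φ (t - r)| ≤ C * T ^ (1 - θ) / (1 - θ) := by
  have hp : 0 < 1 - θ := by linarith
  have hC0 : 0 ≤ C := (abs_nonneg _).trans (hC 0 ⟨le_rfl, ht⟩)
  have hCt : ∀ a, 0 ≤ a → ∀ r ∈ Ioc a t, |φ (t - r)| ≤ C := fun a ha r hr =>
    hC _ ⟨by linarith [hr.2], by linarith [hr.1]⟩
  rw [mul_div_assoc]
  rcases le_or_gt t T with htT | hTt
  · calc _ ≤ C * ((t ^ (1 - θ) - 0 ^ (1 - θ)) / (1 - θ)) :=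
          abs_integral_rpow_mul_le hθ le_rfl ht.le (hCt 0 le_rfl)
      _ ≤ C * (T ^ (1 - θ) / (1 - θ)) := by
          rw [Real.zero_rpow hp.ne', sub_zero]
          gcongr
  · have hsupp : ∫ r in 0..t, r ^ (-θ) * φ (t - r) =
        ∫ r in (t - T)..t, r ^ (-θ) * φ (t - r) := by
      rw [integral_of_le ht.le, integral_of_le (by linarith)]
      refine (setIntegral_eq_of_subset_of_ae_sdiff_eq_zero measurableSet_Ioc.nullMeasurableSet
        (Ioc_subset_Ioc_left (by linarith)) ?_)
      filter_upwards [volume.ae_ne (t - T)] with r hr ⟨⟨_, hrt⟩, hnot⟩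
      have : r < t - T := lt_of_le_of_ne (not_lt.1 fun h => hnot ⟨h, hrt⟩) hr
      rw [hφ _ (by linarith), mul_zero]
    have hsub := Real.rpow_add_le_add_rpow (sub_nonneg.2 hTt.le) hT hp.le (by linarith)
    rw [sub_add_cancel] at hsub
    calc _ ≤ C * ((t ^ (1 - θ) - (t - T) ^ (1 - θ)) / (1 - θ)) :=
          hsupp ▸ abs_integral_rpow_mul_le hθ (by linarith) (by linarith) (hCt _ (by linarith))
      _ ≤ C * (T ^ (1 - θ) / (1 - θ)) := by gcongr; linarith

theorem abs_RLderiv_le {θ : ℝ} (hθ0 : 0 ≤ θ) (hθ : θ < 1) {f : ℝ → ℝ} {L : ℝ≥0}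
    {b t T C : ℝ} (hf : LipschitzOnWith L f (Icc 0 b)) (ht : t ∈ Ioo 0 b) (hT : 0 ≤ T)
    (hC : ∀ s ∈ Ico 0 t, |deriv f s| ≤ C) (hfT : ∀ s, T < s → deriv f s = 0) :
    |RLderiv θ f t| ≤
      (Real.Gamma (1 - θ))⁻¹ * (|f 0| * t ^ (-θ) + C * T ^ (1 - θ) / (1 - θ)) := by
  rw [RLderiv, (hasDerivAt_RLkernel hθ hf ht).deriv, abs_mul,
    abs_of_pos (inv_pos.2 (Real.Gamma_pos_of_pos (by linarith)))]
  gcongr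
  refine (abs_add_le _ _).trans (add_le_add ?_ (abs_integral_rpow_mul_sub_le hθ0 hθ ht.1 hT hC hfT))
  rw [abs_mul, abs_of_nonneg (Real.rpow_nonneg ht.1.le _)]

theorem stmt12_general (θ : ℝ) (hθ : θ ∈ Ioo (0:ℝ) 1)
    (w₁ w₁' : ℝ → ℝ) (Tw B : ℝ) (hTw : 0 < Tw)
    (hd : ∀ t ∈ Ici (0:ℝ), HasDerivAt w₁ (w₁' t) t)
    (hmono : ∀ s t : ℝ, 0 ≤ s → s ≤ t → w₁ s ≤ w₁ t)
    (hpos : ∀ t ∈ Ici (0:ℝ), 0 < w₁ t)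
    (hB : ∀ t ∈ Ici (0:ℝ), |w₁' t| ≤ B)
    (hconst : ∀ t ≥ Tw, w₁ t = w₁ Tw) :
    ∀ t > (0:ℝ),
      |RLderiv θ (fun s => (w₁ s) ^ 2) t| / w₁ t ≤
        w₁ 0 / (t ^ θ * Real.Gamma (1 - θ))
          + 2 * B / Real.Gamma (2 - θ) * Tw ^ (1 - θ) := by
  intro t ht
  set v : ℝ → ℝ := fun s => w₁ s ^ 2
  have hv : ∀ s ∈ Ici (0:ℝ), HasDerivAt v (2 * w₁ s * w₁' s) s := fun s hs => by
    simpa using (hd s hs).fun_pow 2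
  have hv_le : ∀ x, ∀ s ∈ Icc 0 x, |2 * w₁ s * w₁' s| ≤ 2 * B * w₁ x := fun x s hs => by
    rw [abs_mul, abs_mul, abs_two, abs_of_pos (hpos s hs.1)]
    have := hmono s x hs.1 hs.2
    have := hB s hs.1
    have := hpos s hs.1
    nlinarith [abs_nonneg (w₁' s)]
  have hLip : LipschitzOnWith (2 * B * w₁ (t + 1)).toNNReal v (Icc 0 (t + 1)) :=
    (convex_Icc 0 (t + 1)).lipschitzOnWith_of_nnnorm_hasDerivWithin_le
      (fun s hs => (hv s hs.1).hasDerivWithinAt) fun s hs => by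
        rw [← NNReal.coe_le_coe, coe_nnnorm, Real.norm_eq_abs, Real.coe_toNNReal']
        exact (hv_le _ s hs).trans (le_max_left _ _)
  have hv_const : ∀ s, Tw < s → deriv v s = 0 := fun s hs => by
    have : v =ᶠ[𝓝 s] fun _ => w₁ Tw ^ 2 := by
      filter_upwards [Ioi_mem_nhds hs] with u hu
      simp [v, hconst u hu.le]
    rw [this.deriv_eq, deriv_const]
  have hbound := abs_RLderiv_le hθ.1.le hθ.2 hLip ⟨ht, lt_add_one t⟩ hTw.le
    (fun s hs => (hv s hs.1).deriv ▸ hv_le t s ⟨hs.1, hs.2.le⟩) hv_const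
  have hG : 0 < Real.Gamma (1 - θ) := Real.Gamma_pos_of_pos (by linarith [hθ.2])
  have hG2 : Real.Gamma (2 - θ) = (1 - θ) * Real.Gamma (1 - θ) := by
    rw [show 2 - θ = (1 - θ) + 1 by ring, Real.Gamma_add_one (by linarith [hθ.2])]
  have hw0 := hpos 0 self_mem_Ici
  have hv0 : |v 0| ≤ w₁ 0 * w₁ t := by
    rw [abs_sq, sq]
    gcongr
    exact hmono 0 t le_rfl ht.le
  rw [div_le_iff₀ (hpos t ht.le), hG2]
  calc _ ≤ (Real.Gamma (1 - θ))⁻¹ * (w₁ 0 * w₁ t * t ^ (-θ)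
        + 2 * B * w₁ t * Tw ^ (1 - θ) / (1 - θ)) := by
        refine hbound.trans ?_
        gcongr
    _ = _ := by
        rw [Real.rpow_neg ht.le]
        field_simp

theorem stmt12 (θ : ℝ) (hθ : θ ∈ Ioo (0:ℝ) 1)
    (w₁ w₁' : ℝ → ℝ) (Tw B : ℝ) (hTw : 0 < Tw)
    (hd : ∀ t ∈ Ici (0:ℝ), HasDerivAt w₁ (w₁' t) t)
    (hc : ContinuousOn w₁' (Ici 0))
    (hmono : ∀ s t : ℝ, 0 ≤ s → s ≤ t → w₁ s ≤ w₁ t)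
    (hpos : ∀ t ∈ Ici (0:ℝ), 0 < w₁ t)
    (hbd : ∃ Bw, ∀ t ∈ Ici (0:ℝ), |w₁ t| ≤ Bw)
    (hB : ∀ t ∈ Ici (0:ℝ), |w₁' t| ≤ B)
    (hconst : ∀ t ≥ Tw, w₁ t = w₁ Tw) :
    ∀ t > (0:ℝ),
      |RLderiv θ (fun s => (w₁ s) ^ 2) t| / w₁ t ≤
        w₁ 0 / (t ^ θ * Real.Gamma (1 - θ))
          + 2 * B / Real.Gamma (2 - θ) * Tw ^ (1 - θ) :=
  stmt12_general θ hθ w₁ w₁' Tw B hTw hd hmono hpos hB hconst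
end
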